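/- Let t ∈ (0,∞), c ∈ (0,1], and let α be a macroscopic configuration with c_α = c. Then I_Ma(α;t) ≥ I_Ma(δ_c;t) = c log( c/(1 − e^{−tc}) ) + (t/2) c (1 − c). -/

import Mathlib

open scoped BigOperators Classical

namespace ERGraph

/-- A microscopic configuration: `Λ = (λ_k)_{k ≥ 1} ∈ [0,∞)^ℕ` with `c_Λ = ∑ k λ_k ≤ 1`. -/
structure MicroConfig where
  lam : ℕ+ → ℝ
  nonneg : ∀ k, 0 ≤ lam k
  summable' : Summable fun k : ℕ+ => ((k : ℕ) : ℝ) * lam k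
  mass_le : (∑' k : ℕ+, ((k : ℕ) : ℝ) * lam k) ≤ 1

/-- A macroscopic configuration: a nonincreasing sequence in `[0,1]` with sum ≤ 1.
(`a i` represents `α_{i+1}`.) -/
structure MacroConfig where
  a : ℕ → ℝ
  antitone : Antitone a
  nonneg : ∀ i, 0 ≤ a i
  le_one : ∀ i, a i ≤ 1
  summable' : Summable a
  mass_le : (∑' i, a i) ≤ 1

noncomputable def cMi (Λ : MicroConfig) : ℝ := ∑' k : ℕ+, ((k : ℕ) : ℝ) * Λ.lam k

noncomputable def cMa (α : MacroConfig) : ℝ := ∑' i, α.a i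

lemma cMi_nonneg (Λ : MicroConfig) : 0 ≤ cMi Λ :=
  tsum_nonneg fun k => mul_nonneg (by positivity) (Λ.nonneg k)

lemma cMi_le_one (Λ : MicroConfig) : cMi Λ ≤ 1 := Λ.mass_le

lemma cMa_nonneg (α : MacroConfig) : 0 ≤ cMa α := tsum_nonneg α.nonneg

lemma cMa_le_one (α : MacroConfig) : cMa α ≤ 1 := α.mass_le

/-- summand of `I_Mi`:  `λ_k log(k! t λ_k / (e k^{k-2}))`. -/
noncomputable def miTerm (t x : ℝ) (k : ℕ+) : ℝ :=
  x * Real.log (((k : ℕ).factorial : ℝ) * t * x /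
      (Real.exp 1 * ((k : ℕ) : ℝ) ^ (((k : ℕ) : ℤ) - 2)))

/-- `I_Mi(Λ;t)`, as an extended real number (`⊤` if the series diverges). -/
noncomputable def IMi (t : ℝ) (Λ : MicroConfig) : EReal :=
  if Summable (fun k : ℕ+ => miTerm t (Λ.lam k) k)
  then (((∑' k : ℕ+, miTerm t (Λ.lam k) k) + cMi Λ * (1 + t / 2 - Real.log t) : ℝ) : EReal)
  else ⊤

/-- summand of `I_Ma`: `x log(x/(1-e^{-tx})) + (t/2) x (1-x)`. -/
noncomputable def maTerm (t x : ℝ) : ℝ :=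
  x * Real.log (x / (1 - Real.exp (-(t * x)))) + t / 2 * x * (1 - x)

/-- `I_Ma(α;t)` (always a finite real number). -/
noncomputable def IMa (t : ℝ) (α : MacroConfig) : ℝ := ∑' i, maTerm t (α.a i)

/-- The large-deviations rate function `I(Λ,α;t)`. -/
noncomputable def Irate (t : ℝ) (Λ : MicroConfig) (α : MacroConfig) : EReal :=
  if cMi Λ + cMa α ≤ 1
  then IMi t Λ + ((IMa t α + (1 - cMi Λ - cMa α) * (t / 2 - Real.log t) : ℝ) : EReal)
  else ⊤

/-- The macroscopic configuration `δ_x = (x,0,0,…)` for `x ∈ [0,1]`. -/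
noncomputable def deltaConfig (x : ℝ) (h0 : 0 ≤ x) (h1 : x ≤ 1) : MacroConfig where
  a i := if i = 0 then x else 0
  antitone := by
    intro i j hij
    by_cases hj : j = 0
    · have hi : i = 0 := Nat.le_antisymm (hj ▸ hij) (Nat.zero_le i)
      simp [hi, hj]
    · by_cases hi : i = 0 <;> simp [hi, hj, h0]
  nonneg i := by by_cases hi : i = 0 <;> simp [hi, h0]
  le_one i := by
    by_cases hi : i = 0
    · simpa [hi] using h1
    · simp [hi]
  summable' := by
    apply summable_of_ne_finset_zero (s := {0})
    intro i hi
    simp at hi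
    simp [hi]
  mass_le := by
    rw [tsum_eq_single 0]
    · simpa using h1
    · intro b hb; simp [hb]

/-- The zero macroscopic configuration `(0,0,…)`. -/
noncomputable def zeroConfig : MacroConfig where
  a _ := 0
  antitone := antitone_const
  nonneg _ := le_refl 0
  le_one _ := zero_le_one
  summable' := summable_zero
  mass_le := by simp

/-- The candidate minimizer `Λ*(c;t)`, `λ*_k(c;t) = k^{k-2} c^k t^{k-1} e^{-ctk}/k!`. -/
noncomputable def lamStar (c t : ℝ) : ℕ+ → ℝ := fun k =>
  ((k : ℕ) : ℝ) ^ (((k : ℕ) : ℤ) - 2) * c ^ (k : ℕ) * t ^ ((k : ℕ) - 1) *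
    Real.exp (-(c * t * ((k : ℕ) : ℝ))) / ((k : ℕ).factorial : ℝ)

/-- the distance `d` on microscopic configurations. -/
noncomputable def dDist (x y : ℕ+ → ℝ) : ℝ :=
  ∑' k : ℕ+, (2 : ℝ) ^ (-((k : ℕ) : ℤ)) * |x k - y k|

/-- the distance `D` on macroscopic configurations (index `i` represents `α_{i+1}`). -/
noncomputable def DDist (x y : ℕ → ℝ) : ℝ :=
  ∑' i : ℕ, (2 : ℝ) ^ (-((i : ℤ) + 1)) * |x i - y i|

/-- the nonincreasing sequence `ℓ_{⌊·N⌋}` listing `k/N` with multiplicity `ℓ_k`, padded by `0`. -/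
noncomputable def sortedSeq (N : ℕ) (ℓ : ℕ → ℕ) : ℕ → ℝ := fun i =>
  (((((Finset.range (N + 1)).sum fun k => Multiset.replicate (ℓ k) k).sort (· ≤ ·)).reverse.getD
      i 0 : ℕ) : ℝ) / N

/-- extended-real logarithm, with `log 0 = -∞`. -/
noncomputable def elog (x : ℝ) : EReal := if x = 0 then ⊥ else ((Real.log x : ℝ) : EReal)



/-- `(2 - u) ≤ (2 + u) * e^{-u}` for `u ≥ 0`. -/
lemma two_sub_le (u : ℝ) (hu : 0 ≤ u) : 2 - u ≤ (2 + u) * Real.exp (-u) := by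
  have hmono : MonotoneOn (fun v : ℝ => (2 + v) * Real.exp (-v) + v - 2) (Set.Ici (0:ℝ)) := by
    apply monotoneOn_of_deriv_nonneg (convex_Ici 0)
    · fun_prop
    · apply Differentiable.differentiableOn; fun_prop
    · intro v hv
      have hd : HasDerivAt (fun v : ℝ => (2 + v) * Real.exp (-v) + v - 2)
          (1 * Real.exp (-v) + (2 + v) * (Real.exp (-v) * -1) + 1) v := by
        have h := (((((hasDerivAt_id v).const_add 2).mul
          ((Real.hasDerivAt_exp (-v)).comp v ((hasDerivAt_id v).neg))).add
          (hasDerivAt_id v)).sub_const 2)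
        simpa [Function.comp] using h
      rw [hd.deriv]
      rw [interior_Ici] at hv
      have hv' : (0:ℝ) < v := hv
      have h1 : (1 + v) * Real.exp (-v) ≤ 1 := by
        have := Real.add_one_le_exp v
        have hev : (0:ℝ) < Real.exp (-v) := Real.exp_pos _
        have : (1 + v) * Real.exp (-v) ≤ Real.exp v * Real.exp (-v) := by
          apply mul_le_mul_of_nonneg_right (by linarith) hev.le
        rwa [← Real.exp_add, add_neg_cancel, Real.exp_zero] at this
      nlinarith [Real.exp_pos (-v)]
  have h0 : (0:ℝ) ∈ Set.Ici (0:ℝ) := Set.mem_Ici.mpr le_rfl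
  have hu' : u ∈ Set.Ici (0:ℝ) := hu
  have := hmono h0 hu' hu
  norm_num at this
  linarith

/-- derivative bound for the key monotone function. -/
lemma deriv_nonneg (t y : ℝ) (ht : 0 < t) (hy : 0 < y) :
    0 ≤ t / 2 - 1 / y + t * Real.exp (-(t * y)) / (1 - Real.exp (-(t * y))) := by
  set E := Real.exp (-(t * y)) with hE
  have hE0 : 0 < E := Real.exp_pos _
  have hE1 : E < 1 := by
    rw [hE]; apply Real.exp_lt_one_iff.mpr; nlinarith
  have h1E : 0 < 1 - E := by linarith
  have key : 2 - t * y ≤ (2 + t * y) * E := two_sub_le (t * y) (by positivity)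
  rw [← sub_nonneg] at key ⊢
  have expand : t / 2 - 1 / y + t * E / (1 - E) - 0
      = ((2 + t * y) * E - (2 - t * y)) / (2 * y * (1 - E)) := by
    field_simp
    ring
  rw [expand]
  positivity

/-- key monotonicity: `H(x) = (t/2)x - log x + log(1 - e^{-tx})` is monotone. -/
lemma H_mono (t : ℝ) (ht : 0 < t) {x c : ℝ} (hx : 0 < x) (hxc : x ≤ c) :
    t / 2 * x - Real.log x + Real.log (1 - Real.exp (-(t * x))) ≤
      t / 2 * c - Real.log c + Real.log (1 - Real.exp (-(t * c))) := by
  set H : ℝ → ℝ := fun y => t / 2 * y - Real.log y + Real.log (1 - Real.exp (-(t * y))) with hH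
  have hdiff : ∀ y : ℝ, 0 < y → HasDerivAt H
      (t / 2 - 1 / y + t * Real.exp (-(t * y)) / (1 - Real.exp (-(t * y)))) y := by
    intro y hy
    have h1E : (0:ℝ) < 1 - Real.exp (-(t * y)) := by
      have : Real.exp (-(t * y)) < 1 := Real.exp_lt_one_iff.mpr (by nlinarith)
      linarith
    have hinner : HasDerivAt (fun y : ℝ => 1 - Real.exp (-(t * y)))
        (t * Real.exp (-(t * y))) y := by
      have h1 : HasDerivAt (fun y : ℝ => -(t * y)) (-t) y := by
        exact ((hasDerivAt_id y).const_mul t).neg.congr_deriv (by ring)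
      have h2 := (Real.hasDerivAt_exp (-(t * y))).comp y h1
      have h3 := h2.const_sub 1
      exact h3.congr_deriv (by ring)
    have hlog2 := hinner.log h1E.ne'
    have hlog1 := Real.hasDerivAt_log hy.ne'
    have hlin : HasDerivAt (fun y : ℝ => t / 2 * y) (t / 2) y := by
      simpa using (hasDerivAt_id y).const_mul (t / 2)
    have := (hlin.sub hlog1).add hlog2
    exact this.congr_deriv (by rw [one_div])
  have hmono : MonotoneOn H (Set.Icc x c) := by
    apply monotoneOn_of_deriv_nonneg (convex_Icc x c)
    · intro y hy
      exact (hdiff y (lt_of_lt_of_le hx hy.1)).continuousAt.continuousWithinAt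
    · intro y hy
      rw [interior_Icc] at hy
      exact (hdiff y (lt_trans hx hy.1)).differentiableAt.differentiableWithinAt
    · intro y hy
      rw [interior_Icc] at hy
      rw [(hdiff y (lt_trans hx hy.1)).deriv]
      exact deriv_nonneg t y ht (lt_trans hx hy.1)
  exact hmono (Set.left_mem_Icc.mpr hxc) (Set.right_mem_Icc.mpr hxc) hxc


lemma exp_sandwich (u : ℝ) (_hu : 0 < u) :
    u * Real.exp (-u) ≤ 1 - Real.exp (-u) ∧ 1 - Real.exp (-u) ≤ u := by
  have h1 := Real.add_one_le_exp (-u)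
  have h2 := Real.add_one_le_exp u
  have hev : (0:ℝ) < Real.exp (-u) := Real.exp_pos _
  constructor
  · have : (u + 1) * Real.exp (-u) ≤ Real.exp u * Real.exp (-u) :=
      mul_le_mul_of_nonneg_right (by linarith) hev.le
    rw [← Real.exp_add, add_neg_cancel, Real.exp_zero] at this
    nlinarith
  · linarith

lemma maTerm_abs_le (t : ℝ) (ht : 0 < t) {x : ℝ} (hx0 : 0 ≤ x) (hx1 : x ≤ 1) :
    |maTerm t x| ≤ (|Real.log t| + t + t / 2) * x := by
  rcases eq_or_lt_of_le hx0 with h | hx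
  · simp [maTerm, ← h]
  · set E := Real.exp (-(t * x)) with hE
    have hE0 : 0 < E := Real.exp_pos _
    have hs := exp_sandwich (t * x) (by positivity)
    have hD : 0 < 1 - E := by
      have : E < 1 := Real.exp_lt_one_iff.mpr (by nlinarith)
      linarith
    have hlo : -Real.log t ≤ Real.log (x / (1 - E)) := by
      have h1 : 1 / t ≤ x / (1 - E) := by
        rw [div_le_div_iff₀ ht hD]
        nlinarith [hs.2]
      calc -Real.log t = Real.log (1 / t) := by rw [Real.log_div one_ne_zero ht.ne']; simp
        _ ≤ Real.log (x / (1 - E)) := Real.log_le_log (by positivity) h1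
    have hhi : Real.log (x / (1 - E)) ≤ t - Real.log t := by
      have h1 : x / (1 - E) ≤ Real.exp t / t := by
        rw [div_le_div_iff₀ hD ht]
        have : Real.exp (t * x) ≤ Real.exp t := Real.exp_le_exp.mpr (by nlinarith)
        have h2 : t * x ≤ Real.exp (t * x) * (1 - E) := by
          have := hs.1
          have hmul : t * x * E ≤ 1 - E := this
          have hex : Real.exp (t * x) * E = 1 := by
            rw [hE, ← Real.exp_add, add_neg_cancel, Real.exp_zero]
          nlinarith [Real.exp_pos (t * x)]
        nlinarith [Real.exp_pos (t * x)]
      calc Real.log (x / (1 - E)) ≤ Real.log (Real.exp t / t) := Real.log_le_log (by positivity) h1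
        _ = t - Real.log t := by rw [Real.log_div (Real.exp_pos t).ne' ht.ne', Real.log_exp]
    have habs : |Real.log (x / (1 - E))| ≤ |Real.log t| + t := by
      rw [abs_le]
      constructor
      · have := le_abs_self (Real.log t)
        linarith
      · have : Real.log t ≥ -|Real.log t| := neg_abs_le _
        linarith
    have h1 : |x * Real.log (x / (1 - E))| ≤ x * (|Real.log t| + t) := by
      rw [abs_mul, abs_of_nonneg hx0]
      exact mul_le_mul_of_nonneg_left habs hx0
    have h2 : |t / 2 * x * (1 - x)| ≤ t / 2 * x := by
      rw [abs_of_nonneg (by nlinarith)]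
      nlinarith
    calc |maTerm t x| ≤ |x * Real.log (x / (1 - E))| + |t / 2 * x * (1 - x)| := abs_add_le _ _
      _ ≤ x * (|Real.log t| + t) + t / 2 * x := add_le_add h1 h2
      _ = (|Real.log t| + t + t / 2) * x := by ring

lemma maTerm_ge (t c : ℝ) (ht : 0 < t) (hc0 : 0 < c) {x : ℝ} (hx0 : 0 ≤ x) (hxc : x ≤ c) :
    x * (Real.log (c / (1 - Real.exp (-(t * c)))) + t / 2 * (1 - c)) ≤ maTerm t x := by
  rcases eq_or_lt_of_le hx0 with h | hx
  · simp [maTerm, ← h]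
  · have hDx : 0 < 1 - Real.exp (-(t * x)) := by
      have : Real.exp (-(t * x)) < 1 :=
        Real.exp_lt_one_iff.mpr (neg_lt_zero.mpr (mul_pos ht hx))
      linarith
    have hDc : 0 < 1 - Real.exp (-(t * c)) := by
      have : Real.exp (-(t * c)) < 1 :=
        Real.exp_lt_one_iff.mpr (neg_lt_zero.mpr (mul_pos ht hc0))
      linarith
    have key := H_mono t ht hx hxc
    rw [maTerm, Real.log_div hx.ne' hDx.ne', Real.log_div hc0.ne' hDc.ne']
    nlinarith [mul_le_mul_of_nonneg_left key hx0]

/-- Among macroscopic configurations of total mass `c`, `I_Ma(·;t)` is minimized by the single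
macroscopic component `δ_c`, with value `c log(c/(1-e^{-tc})) + (t/2)c(1-c)`. -/
theorem IMa_ge_delta (t : ℝ) (ht : 0 < t) (c : ℝ) (hc0 : 0 < c) (hc1 : c ≤ 1)
    (α : MacroConfig) (hα : cMa α = c) :
    IMa t (deltaConfig c hc0.le hc1) ≤ IMa t α ∧
      IMa t (deltaConfig c hc0.le hc1) =
        c * Real.log (c / (1 - Real.exp (-(t * c)))) + t / 2 * c * (1 - c) := by
  have hδ : IMa t (deltaConfig c hc0.le hc1) = maTerm t c := by
    unfold IMa deltaConfig
    rw [tsum_eq_single 0 (fun b hb => by simp [maTerm, hb])]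
    simp
  have heq : maTerm t c =
      c * Real.log (c / (1 - Real.exp (-(t * c)))) + t / 2 * c * (1 - c) := rfl
  refine ⟨?_, by rw [hδ, heq]⟩
  set gC := Real.log (c / (1 - Real.exp (-(t * c)))) + t / 2 * (1 - c) with hgC
  have hcle : ∀ i, α.a i ≤ c := fun i =>
    hα ▸ Summable.le_tsum α.summable' i (fun j _ => α.nonneg j)
  have hterm : ∀ i, α.a i * gC ≤ maTerm t (α.a i) := fun i =>
    maTerm_ge t c ht hc0 (α.nonneg i) (hcle i)
  have hsum : Summable (fun i => maTerm t (α.a i)) := by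
    refine Summable.of_abs (Summable.of_nonneg_of_le (fun i => abs_nonneg _)
      (fun i => maTerm_abs_le t ht (α.nonneg i) (α.le_one i)) ?_)
    exact (α.summable'.mul_left _)
  have hsumL : Summable (fun i => α.a i * gC) := α.summable'.mul_right gC
  calc IMa t (deltaConfig c hc0.le hc1) = maTerm t c := hδ
    _ = c * gC := by rw [maTerm, hgC]; ring
    _ = ∑' i, α.a i * gC := by rw [tsum_mul_right, ← cMa, hα]
    _ ≤ ∑' i, maTerm t (α.a i) := Summable.tsum_le_tsum hterm hsumL hsum
    _ = IMa t α := rfl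

end ERGraph
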